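/- Let u : ℝ³ → ℝ be a C³ solution of u_yy = u_tx + u_y·u_xx − u_x·u_xy. Then the function v(t,x,y) := 3u − 2x·u_x − y·u_y satisfies the linearized equation v_yy = v_tx + u_y·v_xx + u_xx·v_y − u_x·v_xy − u_xy·v_x at every point of ℝ³. -/

import Mathlib

/-!
The equation is invariant under the scaling `(t, x, y, u) ↦ (t, λ²x, λy, λ³u)`. On a function of
weight `c` it acts infinitesimally by `c f - S f`, where `S = 2x ∂ₓ + y ∂_y`; `θ₂` is the case
`f = u`, `c = 3`. As `[∂ₜ, S] = 0`, `[∂ₓ, S] = 2∂ₓ` and `[∂_y, S] = ∂_y`, the `t`-, `x`- and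
`y`-derivatives of `c f - S f` are again of this form, with weights `c`, `c - 2` and `c - 1`.
Substituting them into the linearized operator `L_u` and collecting terms gives
`L_u(3u - S u) = E[u] - S E[u]` with `E[u] = u_yy - u_tx - u_y u_xx + u_x u_xy`, which vanishes on
a solution.
-/

/-- Partial derivative of `f : ℝ³ → ℝ` in the direction `v`. -/
noncomputable def pd3 (v : ℝ × ℝ × ℝ) (f : ℝ × ℝ × ℝ → ℝ) : ℝ × ℝ × ℝ → ℝ :=
  fun p => fderiv ℝ f p v

noncomputable def dt : (ℝ × ℝ × ℝ → ℝ) → ℝ × ℝ × ℝ → ℝ := pd3 (1, 0, 0)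
noncomputable def dx : (ℝ × ℝ × ℝ → ℝ) → ℝ × ℝ × ℝ → ℝ := pd3 (0, 1, 0)
noncomputable def dy : (ℝ × ℝ × ℝ → ℝ) → ℝ × ℝ × ℝ → ℝ := pd3 (0, 0, 1)

section Calculus

variable {f g : ℝ × ℝ × ℝ → ℝ} {p : ℝ × ℝ × ℝ}

theorem ContDiff.contDiff_pd3 {m n : WithTop ℕ∞} (hf : ContDiff ℝ n f) (hmn : m + 1 ≤ n)
    (w : ℝ × ℝ × ℝ) : ContDiff ℝ m (pd3 w f) :=
  (hf.fderiv_right hmn).clm_apply contDiff_const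

theorem ContDiff.differentiable_pd3 (hf : ContDiff ℝ 2 f) (w : ℝ × ℝ × ℝ) :
    Differentiable ℝ (pd3 w f) :=
  ((hf.contDiff_pd3 (m := 1) le_rfl) w).differentiable one_ne_zero

theorem pd3_comm (hf : ContDiff ℝ 2 f) (v w : ℝ × ℝ × ℝ) :
    pd3 v (pd3 w f) p = pd3 w (pd3 v f) p := by
  have hdf : Differentiable ℝ (fderiv ℝ f) :=
    (hf.fderiv_right le_rfl).differentiable one_ne_zero
  have h (a b) : pd3 a (pd3 b f) p = fderiv ℝ (fderiv ℝ f) p a b := by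
    change fderiv ℝ (fun q => fderiv ℝ f q b) p a = _
    simp [fderiv_clm_apply (hdf p) (differentiableAt_const b)]
  rw [h, h]
  exact hf.contDiffAt.isSymmSndFDerivAt (by simp) v w

theorem pd3_fun_add (w : ℝ × ℝ × ℝ) (hf : DifferentiableAt ℝ f p)
    (hg : DifferentiableAt ℝ g p) :
    pd3 w (fun q => f q + g q) p = pd3 w f p + pd3 w g p := by
  simp [pd3, fderiv_fun_add hf hg]

theorem pd3_fun_sub (w : ℝ × ℝ × ℝ) (hf : DifferentiableAt ℝ f p)
    (hg : DifferentiableAt ℝ g p) :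
    pd3 w (fun q => f q - g q) p = pd3 w f p - pd3 w g p := by
  simp [pd3, fderiv_fun_sub hf hg]

theorem pd3_fun_mul (w : ℝ × ℝ × ℝ) (hf : DifferentiableAt ℝ f p)
    (hg : DifferentiableAt ℝ g p) :
    pd3 w (fun q => f q * g q) p = pd3 w f p * g p + f p * pd3 w g p := by
  simp only [pd3, fderiv_fun_mul hf hg, add_apply, smul_apply, smul_eq_mul]
  ring

theorem pd3_const (w : ℝ × ℝ × ℝ) (c : ℝ) : pd3 w (fun _ => c) p = 0 := by
  simp [pd3]

theorem pd3_coord_x (w : ℝ × ℝ × ℝ) : pd3 w (fun q => q.2.1) p = w.2.1 := by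
  simp [pd3, (hasFDerivAt_snd (𝕜 := ℝ) (p := p)).fst.fderiv]

theorem pd3_coord_y (w : ℝ × ℝ × ℝ) : pd3 w (fun q => q.2.2) p = w.2.2 := by
  simp [pd3, (hasFDerivAt_snd (𝕜 := ℝ) (p := p)).snd.fderiv]

end Calculus

noncomputable def weightedEuler (f : ℝ × ℝ × ℝ → ℝ) : ℝ × ℝ × ℝ → ℝ :=
  fun q => 2 * q.2.1 * dx f q + q.2.2 * dy f q

noncomputable def scalingGenerator (c : ℝ) (f : ℝ × ℝ × ℝ → ℝ) : ℝ × ℝ × ℝ → ℝ :=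
  fun q => c * f q - weightedEuler f q

section Scaling

variable {f : ℝ × ℝ × ℝ → ℝ}

theorem pd3_weightedEuler (hf : ContDiff ℝ 2 f) (w q : ℝ × ℝ × ℝ) :
    pd3 w (weightedEuler f) q
      = weightedEuler (pd3 w f) q + (2 * w.2.1 * dx f q + w.2.2 * dy f q) := by
  have hx := hf.differentiable_pd3 (0, 1, 0)
  have hy := hf.differentiable_pd3 (0, 0, 1)
  unfold weightedEuler dx dy
  simp (disch := fun_prop) only [pd3_fun_add, pd3_fun_mul, pd3_const, pd3_coord_x, pd3_coord_y]
  rw [pd3_comm hf w, pd3_comm hf w]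
  ring

theorem ContDiff.differentiable_weightedEuler (hf : ContDiff ℝ 2 f) :
    Differentiable ℝ (weightedEuler f) := by
  have hx := hf.differentiable_pd3 (0, 1, 0)
  have hy := hf.differentiable_pd3 (0, 0, 1)
  unfold _root_.weightedEuler dx dy
  fun_prop

theorem pd3_scalingGenerator (hf : ContDiff ℝ 2 f) (c : ℝ) (w q : ℝ × ℝ × ℝ) :
    pd3 w (scalingGenerator c f) q
      = c * pd3 w f q - weightedEuler (pd3 w f) q - (2 * w.2.1 * dx f q + w.2.2 * dy f q) := by
  have hf' := hf.differentiable two_ne_zero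
  have hE := hf.differentiable_weightedEuler
  unfold scalingGenerator
  simp (disch := fun_prop) only [pd3_fun_sub, pd3_fun_mul, pd3_const, pd3_weightedEuler hf]
  ring

theorem dt_scalingGenerator (hf : ContDiff ℝ 2 f) (c : ℝ) :
    dt (scalingGenerator c f) = scalingGenerator c (dt f) := by
  ext q
  simp only [dt, scalingGenerator, pd3_scalingGenerator hf]
  ring

theorem dx_scalingGenerator (hf : ContDiff ℝ 2 f) (c : ℝ) :
    dx (scalingGenerator c f) = scalingGenerator (c - 2) (dx f) := by
  ext q
  simp only [dx, scalingGenerator, pd3_scalingGenerator hf]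
  ring

theorem dy_scalingGenerator (hf : ContDiff ℝ 2 f) (c : ℝ) :
    dy (scalingGenerator c f) = scalingGenerator (c - 1) (dy f) := by
  ext q
  simp only [dy, scalingGenerator, pd3_scalingGenerator hf]
  ring

end Scaling

noncomputable def mikhalev (u : ℝ × ℝ × ℝ → ℝ) : ℝ × ℝ × ℝ → ℝ :=
  fun p => dy (dy u) p - dt (dx u) p - dy u p * dx (dx u) p + dx u p * dx (dy u) p

noncomputable def linearizedMikhalev (u v : ℝ × ℝ × ℝ → ℝ) : ℝ × ℝ × ℝ → ℝ :=
  fun p => dy (dy v) p - dt (dx v) p - dy u p * dx (dx v) p - dx (dx u) p * dy v p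
    + dx u p * dx (dy v) p + dx (dy u) p * dx v p

section Mikhalev

variable {u : ℝ × ℝ × ℝ → ℝ}

theorem pd3_mikhalev (hu : ContDiff ℝ 3 u) (w p : ℝ × ℝ × ℝ) :
    pd3 w (mikhalev u) p = pd3 w (dy (dy u)) p - pd3 w (dt (dx u)) p
      - (pd3 w (dy u) p * dx (dx u) p + dy u p * pd3 w (dx (dx u)) p)
      + (pd3 w (dx u) p * dx (dy u) p + dx u p * pd3 w (dx (dy u)) p) := by
  have h1 (v) : Differentiable ℝ (pd3 v u) :=
    (hu.of_le (by norm_num)).differentiable_pd3 v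
  have h2 (v v') : Differentiable ℝ (pd3 v (pd3 v' u)) :=
    (hu.contDiff_pd3 (by norm_num) v').differentiable_pd3 v
  unfold mikhalev dt dx dy
  simp (disch := fun_prop) only [pd3_fun_add, pd3_fun_sub, pd3_fun_mul]

theorem linearizedMikhalev_scalingGenerator (hu : ContDiff ℝ 3 u) (p : ℝ × ℝ × ℝ) :
    linearizedMikhalev u (scalingGenerator 3 u) p
      = mikhalev u p - weightedEuler (mikhalev u) p := by
  have hu2 : ContDiff ℝ 2 u := hu.of_le (by norm_num)
  have hux : ContDiff ℝ 2 (dx u) := hu.contDiff_pd3 (by norm_num) _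
  have huy : ContDiff ℝ 2 (dy u) := hu.contDiff_pd3 (by norm_num) _
  rw [linearizedMikhalev, dx_scalingGenerator hu2, dy_scalingGenerator hu2,
    dy_scalingGenerator huy, dt_scalingGenerator hux, dx_scalingGenerator hux,
    dx_scalingGenerator huy]
  simp only [scalingGenerator, weightedEuler, dx, dy, pd3_mikhalev hu]
  unfold mikhalev dx dy
  ring

end Mikhalev

theorem theta2_is_symmetry (u : ℝ × ℝ × ℝ → ℝ) (hu : ContDiff ℝ 3 u)
    (heq : ∀ p : ℝ × ℝ × ℝ,
      dy (dy u) p = dt (dx u) p + dy u p * dx (dx u) p - dx u p * dx (dy u) p) :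
    ∀ p : ℝ × ℝ × ℝ,
      (fun v : ℝ × ℝ × ℝ → ℝ =>
        dy (dy v) p = dt (dx v) p + dy u p * dx (dx v) p + dx (dx u) p * dy v p
          - dx u p * dx (dy v) p - dx (dy u) p * dx v p)
      (fun q => 3 * u q - 2 * q.2.1 * dx u q - q.2.2 * dy u q) := by
  intro p
  have hθ :
      (fun q => 3 * u q - 2 * q.2.1 * dx u q - q.2.2 * dy u q) = scalingGenerator 3 u := by
    ext q
    simp only [scalingGenerator, weightedEuler]
    ring
  have hE : mikhalev u = 0 := by
    ext q
    simp only [mikhalev, heq q, Pi.zero_apply]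
    ring
  have hEuler : weightedEuler (mikhalev u) p = 0 := by
    simp [hE, weightedEuler, dx, dy, pd3]
  have hL := linearizedMikhalev_scalingGenerator hu p
  rw [hEuler, hE, ← hθ] at hL
  simp only [linearizedMikhalev, Pi.zero_apply] at hL
  linarith
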